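/- arXiv:2510.07553 — 10 statements merged into one kernel-verified Lean document; each statement's English description precedes it below -/
import Mathlib

section
/- If ~ is a 3-concentration structure on a small category C (i.e., an equivalence relation on morphisms satisfying the identity axiom, composition axiom, and 3-existence axiom), then ~ satisfies the associativity axiom: for any morphisms f~f', g~g', h~h', m~f∘g, n~g'∘h' such that f'∘n and m∘h are defined, we have f'∘n ~ m∘h. Hence every 3-concentration structure is a concentration structure. -/
open CategoryTheory

universe w v v₂ v₃ u u₂ u₃

/-- The type of all morphisms of a category (with specified source and target). -/
abbrev Mor (C : Type u) [CategoryStruct.{v} C] : Type (max u v) := Σ X Y : C, X ⟶ Y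

/-- A concentration structure on a (small) category `C`: an equivalence relation on the
morphisms of `C` satisfying the identity, composition, 2-existence and associativity axioms.
Here `f ∘ g` of the paper is `g ≫ f`. -/
structure ConcStruct (C : Type u) [CategoryStruct.{v} C] : Type (max u v) where
  r : Mor C → Mor C → Prop
  equiv : Equivalence r
  ident : ∀ A B : C, r ⟨A, A, 𝟙 A⟩ ⟨B, B, 𝟙 B⟩
  comp : ∀ {X Y Z X' Y' Z' : C} (g : X ⟶ Y) (f : Y ⟶ Z) (g' : X' ⟶ Y') (f' : Y' ⟶ Z'),
    r ⟨Y, Z, f⟩ ⟨Y', Z', f'⟩ → r ⟨X, Y, g⟩ ⟨X', Y', g'⟩ →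
    r ⟨X, Z, g ≫ f⟩ ⟨X', Z', g' ≫ f'⟩
  exists2 : ∀ f g : Mor C, ∃ (X Y Z : C) (f' : Y ⟶ Z) (g' : X ⟶ Y),
    r ⟨Y, Z, f'⟩ f ∧ r ⟨X, Y, g'⟩ g
  assoc : ∀ {A B C₀ U V W X Y P Q R S : C}
    (f : B ⟶ C₀) (g : A ⟶ B) (f' : U ⟶ V) (g' : X ⟶ Y)
    (h : S ⟶ Q) (h' : W ⟶ X) (m : Q ⟶ R) (n : P ⟶ U),
    r ⟨B, C₀, f⟩ ⟨U, V, f'⟩ → r ⟨A, B, g⟩ ⟨X, Y, g'⟩ → r ⟨S, Q, h⟩ ⟨W, X, h'⟩ →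
    r ⟨Q, R, m⟩ ⟨A, C₀, g ≫ f⟩ → r ⟨P, U, n⟩ ⟨W, Y, h' ≫ g'⟩ →
    r ⟨P, V, n ≫ f'⟩ ⟨S, R, h ≫ m⟩

/-- The underlying set of the concentration monoid: morphisms modulo the concentration. -/
abbrev ConcMon {C : Type u} [CategoryStruct.{v} C] (cs : ConcStruct C) : Type (max u v) :=
  Quot cs.r

/-- The class of a morphism in the concentration monoid. -/
def ConcStruct.q {C : Type u} [CategoryStruct.{v} C] (cs : ConcStruct C) (f : Mor C) :
    ConcMon cs := Quot.mk cs.r f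

/-- A monoid structure on `ConcMon cs` is *the* concentration monoid structure when the unit is
the class of identity morphisms and multiplication is given by composition:
`[f] * [g] = [g ≫ f]` for composable `g`, `f` (that is, `[f][g] = [f ∘ g]`). -/
def IsConcMonoid {C : Type u} [CategoryStruct.{v} C] (cs : ConcStruct C)
    [m : Monoid (ConcMon cs)] : Prop :=
  (∀ A : C, cs.q ⟨A, A, 𝟙 A⟩ = 1) ∧
  ∀ {X Y Z : C} (g : X ⟶ Y) (f : Y ⟶ Z),
    cs.q ⟨Y, Z, f⟩ * cs.q ⟨X, Y, g⟩ = cs.q ⟨X, Z, g ≫ f⟩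

section
variable {C : Type u} [Category.{v} C]

/-- Identity axiom. -/
def IdentAxiom (r : Mor C → Mor C → Prop) : Prop :=
  ∀ A B : C, r ⟨A, A, 𝟙 A⟩ ⟨B, B, 𝟙 B⟩

/-- Composition axiom. -/
def CompAxiom (r : Mor C → Mor C → Prop) : Prop :=
  ∀ {X Y Z X' Y' Z' : C} (g : X ⟶ Y) (f : Y ⟶ Z) (g' : X' ⟶ Y') (f' : Y' ⟶ Z'),
    r ⟨Y, Z, f⟩ ⟨Y', Z', f'⟩ → r ⟨X, Y, g⟩ ⟨X', Y', g'⟩ →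
    r ⟨X, Z, g ≫ f⟩ ⟨X', Z', g' ≫ f'⟩

/-- 3-existence axiom: any three morphisms have equivalent representatives forming a
composable triple. -/
def Exists3Axiom (r : Mor C → Mor C → Prop) : Prop :=
  ∀ f g h : Mor C, ∃ (W X Y Z : C) (f' : Y ⟶ Z) (g' : X ⟶ Y) (h' : W ⟶ X),
    r ⟨Y, Z, f'⟩ f ∧ r ⟨X, Y, g'⟩ g ∧ r ⟨W, X, h'⟩ h

/-- Associativity axiom: for `f ~ f'`, `g ~ g'`, `h ~ h'`, `m ~ f∘g`, `n ~ g'∘h'`,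
`f' ∘ n ~ m ∘ h` whenever these compositions are defined. -/
def AssocAxiom (r : Mor C → Mor C → Prop) : Prop :=
  ∀ {A B C₀ U V W X Y P Q R S : C}
    (f : B ⟶ C₀) (g : A ⟶ B) (f' : U ⟶ V) (g' : X ⟶ Y)
    (h : S ⟶ Q) (h' : W ⟶ X) (m : Q ⟶ R) (n : P ⟶ U),
    r ⟨B, C₀, f⟩ ⟨U, V, f'⟩ → r ⟨A, B, g⟩ ⟨X, Y, g'⟩ → r ⟨S, Q, h⟩ ⟨W, X, h'⟩ →
    r ⟨Q, R, m⟩ ⟨A, C₀, g ≫ f⟩ → r ⟨P, U, n⟩ ⟨W, Y, h' ≫ g'⟩ →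
    r ⟨P, V, n ≫ f'⟩ ⟨S, R, h ≫ m⟩

/-- Every 3-concentration structure satisfies the associativity axiom, and hence is a
concentration structure. -/
theorem threeConc_is_conc (r : Mor C → Mor C → Prop) (hequiv : Equivalence r)
    (h1 : IdentAxiom r) (h2 : CompAxiom r) (h3 : Exists3Axiom r) :
    AssocAxiom r ∧ ∃ cs : ConcStruct C, cs.r = r := by
  have assoc : AssocAxiom r := by
    intro A B C₀ U V W X Y P Q R S f g f' g' h h' m n hf hg hh hm hn
    obtain ⟨W1, X1, Y1, Z1, f1, g1, h1, hf1, hg1, hh1⟩ :=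
      h3 ⟨B, C₀, f⟩ ⟨A, B, g⟩ ⟨S, Q, h⟩
    -- f1 ~ f, g1 ~ g, h1 ~ h, and h1 ≫ g1 ≫ f1 composable
    have hff' : r ⟨Y1, Z1, f1⟩ ⟨U, V, f'⟩ := hequiv.trans hf1 hf
    have hgg' : r ⟨X1, Y1, g1⟩ ⟨X, Y, g'⟩ := hequiv.trans hg1 hg
    have hhh' : r ⟨W1, X1, h1⟩ ⟨W, X, h'⟩ := hequiv.trans hh1 hh
    -- n ~ h' ≫ g' ~ h1 ≫ g1
    have hn1 : r ⟨P, U, n⟩ ⟨W1, Y1, h1 ≫ g1⟩ :=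
      hequiv.trans hn (hequiv.symm (h2 h1 g1 h' g' hgg' hhh'))
    -- n ≫ f' ~ (h1 ≫ g1) ≫ f1
    have key1 : r ⟨P, V, n ≫ f'⟩ ⟨W1, Z1, (h1 ≫ g1) ≫ f1⟩ :=
      h2 n f' (h1 ≫ g1) f1 (hequiv.symm hff') hn1
    -- m ~ g ≫ f ~ g1 ≫ f1
    have hm1 : r ⟨Q, R, m⟩ ⟨X1, Z1, g1 ≫ f1⟩ :=
      hequiv.trans hm (hequiv.symm (h2 g1 f1 g f (hequiv.trans hf1 (hequiv.refl _)) hg1))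
    -- h ≫ m ~ h1 ≫ (g1 ≫ f1)
    have key2 : r ⟨S, R, h ≫ m⟩ ⟨W1, Z1, h1 ≫ g1 ≫ f1⟩ :=
      h2 h m h1 (g1 ≫ f1) hm1 (hequiv.symm hh1)
    have : r ⟨P, V, n ≫ f'⟩ ⟨S, R, h ≫ m⟩ := by
      rw [Category.assoc] at key1
      exact hequiv.trans key1 (hequiv.symm key2)
    exact this
  have ex2 : ∀ f g : Mor C, ∃ (X Y Z : C) (f' : Y ⟶ Z) (g' : X ⟶ Y),
      r ⟨Y, Z, f'⟩ f ∧ r ⟨X, Y, g'⟩ g := by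
    intro f g
    obtain ⟨W1, X1, Y1, Z1, f1, g1, h1, hf1, hg1, hh1⟩ := h3 f g ⟨f.1, f.1, 𝟙 f.1⟩
    exact ⟨X1, Y1, Z1, f1, g1, hf1, hg1⟩
  refine ⟨assoc, ⟨⟨r, hequiv, h1, @h2, ex2, ?_⟩, rfl⟩⟩
  intro A B C₀ U V W X Y P Q R S f g f' g' h h' m n hf hg hh hm hn
  exact assoc f g f' g' h h' m n hf hg hh hm hn

end
end

section
/- Let (C, ~) be a small category with a concentration structure. Then the quotient set M = Mor(C)/~ with multiplication [f][g] = [f'∘g'], where f'~f, g'~g are chosen so that f'∘g' exists, is well-defined: the result does not depend on the choice of representatives f', g'. -/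
open CategoryTheory

universe w v v₂ v₃ u u₂ u₃

/-- Well-definedness of the concentration monoid multiplication: the class of `g' ≫ f'`
(i.e. `f' ∘ g'`) does not depend on the chosen composable representatives. -/
theorem concMul_well_defined {C : Type u} [Category.{v} C] (cs : ConcStruct C)
    {X₁ Y₁ Z₁ X₂ Y₂ Z₂ : C} (f₁' : Y₁ ⟶ Z₁) (g₁' : X₁ ⟶ Y₁) (f₂' : Y₂ ⟶ Z₂) (g₂' : X₂ ⟶ Y₂)
    (f₁ f₂ g₁ g₂ : Mor C)
    (hf : cs.r f₁ f₂) (hg : cs.r g₁ g₂)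
    (h₁f : cs.r ⟨Y₁, Z₁, f₁'⟩ f₁) (h₁g : cs.r ⟨X₁, Y₁, g₁'⟩ g₁)
    (h₂f : cs.r ⟨Y₂, Z₂, f₂'⟩ f₂) (h₂g : cs.r ⟨X₂, Y₂, g₂'⟩ g₂) :
    cs.r ⟨X₁, Z₁, g₁' ≫ f₁'⟩ ⟨X₂, Z₂, g₂' ≫ f₂'⟩ := by
  exact cs.comp _ _ _ _
    (cs.equiv.trans h₁f (cs.equiv.trans hf (cs.equiv.symm h₂f)))
    (cs.equiv.trans h₁g (cs.equiv.trans hg (cs.equiv.symm h₂g)))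
end

section
/- Let F: C → D be a 2-lifting functor between small categories (i.e., for any composable pair g_1, g_2 in D there exist composable f_1, f_2 in C with F(f_1) = g_1 and F(f_2) = g_2), and let ~_D be a concentration structure on D. Define f ~* g in C iff F(f) ~_D F(g). Then ~* is a concentration structure on C. -/
open CategoryTheory

universe w v v₂ v₃ u u₂ u₃

/-- The action of a functor on the set of all morphisms. -/
def Mor.map {C : Type u} {D : Type u₂} [Category.{v} C] [Category.{v₂} D]
    (F : C ⥤ D) (f : Mor C) : Mor D :=
  ⟨F.obj f.1, F.obj f.2.1, F.map f.2.2⟩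

/-- The map induced on concentration monoids by a concentration preserving functor. -/
def concMap {C : Type u} {D : Type u₂} [Category.{v} C] [Category.{v₂} D]
    (cs : ConcStruct C) (ds : ConcStruct D) (F : C ⥤ D)
    (hF : ∀ f g : Mor C, cs.r f g → ds.r (Mor.map F f) (Mor.map F g)) :
    ConcMon cs → ConcMon ds :=
  Quot.lift (fun f => ds.q (Mor.map F f)) (fun a b h => Quot.sound (hF a b h))

/-- A functor is 2-lifting if every composable pair of morphisms downstairs lifts to a
composable pair upstairs. -/
def TwoLifting {C : Type u} {D : Type u₂} [Category.{v} C] [Category.{v₂} D] (F : C ⥤ D) : Prop :=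
  ∀ {X Y Z : D} (g₂ : X ⟶ Y) (g₁ : Y ⟶ Z),
    ∃ (A B B' : C) (f₂ : A ⟶ B) (f₁ : B ⟶ B'),
      Mor.map F ⟨B, B', f₁⟩ = (⟨Y, Z, g₁⟩ : Mor D) ∧
      Mor.map F ⟨A, B, f₂⟩ = (⟨X, Y, g₂⟩ : Mor D)

/-- The pullback of a concentration structure along a 2-lifting functor is a concentration
structure. -/
theorem pullback_conc_exists {C : Type u} {D : Type u₂} [Category.{v} C] [Category.{v₂} D]
    (F : C ⥤ D) (hlift : TwoLifting F) (ds : ConcStruct D) :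
    ∃ cs : ConcStruct C, ∀ f g : Mor C,
      cs.r f g ↔ ds.r (Mor.map F f) (Mor.map F g) := by
  refine ⟨{ r := fun f g => ds.r (Mor.map F f) (Mor.map F g)
            equiv := ⟨fun _ => ds.equiv.refl _, fun h => ds.equiv.symm h,
              fun h h' => ds.equiv.trans h h'⟩
            ident := ?_
            comp := ?_
            exists2 := ?_
            assoc := ?_ }, fun _ _ => Iff.rfl⟩
  · intro A B
    have := ds.ident (F.obj A) (F.obj B)
    simpa [Mor.map] using this
  · intro X Y Z X' Y' Z' g f g' f' hf hg
    have := ds.comp (F.map g) (F.map f) (F.map g') (F.map f') hf hg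
    simpa [Mor.map] using this
  · intro f g
    obtain ⟨X, Y, Z, f', g', hf, hg⟩ := ds.exists2 (Mor.map F f) (Mor.map F g)
    obtain ⟨A, B, B', f₂, f₁, h1, h2⟩ := hlift g' f'
    refine ⟨A, B, B', f₁, f₂, ?_, ?_⟩
    · show ds.r (Mor.map F ⟨B, B', f₁⟩) (Mor.map F f)
      rw [h1]; exact hf
    · show ds.r (Mor.map F ⟨A, B, f₂⟩) (Mor.map F g)
      rw [h2]; exact hg
  · intro A B C₀ U V W X Y P Q R S f g f' g' h h' m n hf hg hh hm hn
    have := ds.assoc (F.map f) (F.map g) (F.map f') (F.map g') (F.map h)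
      (F.map h') (F.map m) (F.map n) hf hg hh
      (by simpa [Mor.map] using hm) (by simpa [Mor.map] using hn)
    simpa [Mor.map] using this
end

section
/- Let F: C → D be a 2-lifting functor and ~_D a concentration structure on D, with pullback concentration ~* on C defined by f ~* g iff F(f) ~_D F(g). Then F: (C, ~*) → (D, ~_D) is concentration preserving, and the induced monoid homomorphism φ_F: M_(C,~*) → M_(D,~_D), [f] ↦ [F(f)], is a monoid isomorphism. -/
open CategoryTheory

universe w v v₂ v₃ u u₂ u₃

/-- A 2-lifting functor, with the pullback concentration upstairs, is concentration
preserving and induces an isomorphism between the concentration monoids. -/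
theorem pullback_concMap_iso {C : Type u} {D : Type u₂} [Category.{v} C] [Category.{v₂} D]
    (F : C ⥤ D) (hlift : TwoLifting F) (ds : ConcStruct D) (cs : ConcStruct C)
    (hpull : ∀ f g : Mor C, cs.r f g ↔ ds.r (Mor.map F f) (Mor.map F g))
    [Mc : Monoid (ConcMon cs)] [Md : Monoid (ConcMon ds)]
    (hMc : IsConcMonoid cs) (hMd : IsConcMonoid ds) :
    (∀ f g : Mor C, cs.r f g → ds.r (Mor.map F f) (Mor.map F g)) ∧
    (concMap cs ds F (fun f g h => (hpull f g).1 h) 1 = 1) ∧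
    (∀ x y : ConcMon cs, concMap cs ds F (fun f g h => (hpull f g).1 h) (x * y) =
      concMap cs ds F (fun f g h => (hpull f g).1 h) x *
        concMap cs ds F (fun f g h => (hpull f g).1 h) y) ∧
    Function.Bijective (concMap cs ds F (fun f g h => (hpull f g).1 h)) := by
  set φ := concMap cs ds F (fun f g h => (hpull f g).1 h) with hφ
  have hφq : ∀ f : Mor C, φ (cs.q f) = ds.q (Mor.map F f) := fun f => rfl
  have hone : φ 1 = 1 := by
    obtain ⟨f, hf⟩ := Quot.exists_rep (1 : ConcMon cs)
    have hA := (hMc.1 f.1)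
    rw [← hA, hφq]
    have : Mor.map F ⟨f.1, f.1, 𝟙 f.1⟩ = ⟨F.obj f.1, F.obj f.1, 𝟙 (F.obj f.1)⟩ := by
      simp [Mor.map]
    rw [this]
    exact hMd.1 (F.obj f.1)
  refine ⟨fun f g h => (hpull f g).1 h, hone, ?_, ?_, ?_⟩
  · intro x y
    obtain ⟨f, rfl⟩ := Quot.exists_rep x
    obtain ⟨g, rfl⟩ := Quot.exists_rep y
    obtain ⟨X, Y, Z, f', g', hf', hg'⟩ := cs.exists2 f g
    have hx : Quot.mk cs.r f = cs.q ⟨Y, Z, f'⟩ := (Quot.sound hf').symm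
    have hy : Quot.mk cs.r g = cs.q ⟨X, Y, g'⟩ := (Quot.sound hg').symm
    rw [hx, hy, hMc.2 g' f', hφq, hφq, hφq]
    have : Mor.map F ⟨X, Z, g' ≫ f'⟩ =
        ⟨F.obj X, F.obj Z, F.map g' ≫ F.map f'⟩ := by simp [Mor.map]
    rw [this, ← hMd.2 (F.map g') (F.map f')]
    rfl
  · intro x y hxy
    obtain ⟨f, rfl⟩ := Quot.exists_rep x
    obtain ⟨g, rfl⟩ := Quot.exists_rep y
    have hxy' : ds.q (Mor.map F f) = ds.q (Mor.map F g) := hxy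
    have := Quot.eqvGen_exact hxy'
    have hr := ds.equiv.eqvGen_iff.1 this
    exact Quot.sound ((hpull f g).2 hr)
  · intro y
    obtain ⟨d, rfl⟩ := Quot.exists_rep y
    obtain ⟨A, B, B', f₂, f₁, h1, h2⟩ := hlift (𝟙 d.1) d.2.2
    refine ⟨cs.q ⟨B, B', f₁⟩, ?_⟩
    rw [hφq, h1]
    rfl
end

section
/- Let (C, ~) be a small category with concentration, let M_(C,~) be its concentration monoid, and let M be the one-object category with morphisms M_(C,~). The concentrating functor F: C → M, sending every object to the unique object and every morphism f to its class [f], is a 2-lifting functor. -/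
open CategoryTheory

universe w v v₂ v₃ u u₂ u₃

/-- The concentrating functor from `C` to the one-object category on the concentration
monoid, sending every object to the point and each morphism to its class. -/
def concentratingFunctor {C : Type u} [Category.{v} C] (cs : ConcStruct C)
    [m : Monoid (ConcMon cs)] (hm : IsConcMonoid cs) :
    C ⥤ SingleObj (ConcMon cs) where
  obj _ := SingleObj.star _
  map {X Y} f := cs.q ⟨X, Y, f⟩
  map_id A := hm.1 A
  map_comp {X Y Z} f g := (hm.2 f g).symm

/-- The concentrating functor is a 2-lifting functor. -/
theorem concentratingFunctor_twoLifting {C : Type u} [Category.{v} C] (cs : ConcStruct C)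
    [m : Monoid (ConcMon cs)] (hm : IsConcMonoid cs) :
    TwoLifting (concentratingFunctor cs hm) := by
  intro X Y Z g₂ g₁
  obtain ⟨f, hf⟩ := Quot.exists_rep g₁
  obtain ⟨g, hg⟩ := Quot.exists_rep g₂
  obtain ⟨A, B, B', f', g', hf', hg'⟩ := cs.exists2 f g
  refine ⟨A, B, B', g', f', ?_, ?_⟩
  · have : cs.q ⟨B, B', f'⟩ = g₁ := hf ▸ Quot.sound hf'
    cases X; cases Y; cases Z
    exact Sigma.ext rfl (heq_of_eq (Sigma.ext rfl (heq_of_eq this)))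
  · have : cs.q ⟨A, B, g'⟩ = g₂ := hg ▸ Quot.sound hg'
    cases X; cases Y; cases Z
    exact Sigma.ext rfl (heq_of_eq (Sigma.ext rfl (heq_of_eq this)))
end

section
/- The concentration monoid functor M: Cat_~ → Mon is left adjoint to the functor C_~: Mon → Cat_~ sending a monoid M to its one-object category with discrete concentration. Concretely: the counit ε_M = id_M and the unit η_(C,~) = the concentrating functor C → M_(C,~)-category satisfy the triangle identities (Mη then εM is the identity on M, and ηC_~ then C_~ε is the identity on C_~). -/
open CategoryTheory

universe w v v₂ v₃ u u₂ u₃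

/-- The element of `N` underlying a morphism of the one-object category `SingleObj N`. -/
def morElem {N : Type w} [Monoid N] (f : Mor (SingleObj N)) : N := f.2.2

/-- The discrete concentration structure (equality of morphisms) on the one-object
category associated to a monoid `N`. -/
def discreteConc (N : Type w) [Monoid N] : ConcStruct (SingleObj N) where
  r f g := morElem f = morElem g
  equiv := ⟨fun _ => rfl, Eq.symm, Eq.trans⟩
  ident _ _ := rfl
  comp g f g' f' h1 h2 := by
    show (f * g : N) = f' * g'
    have e1 : (f : N) = f' := h1
    have e2 : (g : N) = g' := h2
    rw [e1, e2]
  exists2 f g :=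
    ⟨SingleObj.star N, SingleObj.star N, SingleObj.star N, morElem f, morElem g, rfl, rfl⟩
  assoc f g f' g' h h' m n h1 h2 h3 h4 h5 := by
    show (f' * n : N) = m * h
    have e1 : (f : N) = f' := h1
    have e2 : (g : N) = g' := h2
    have e3 : (h : N) = h' := h3
    have e4 : (m : N) = f * g := h4
    have e5 : (n : N) = g' * h' := h5
    rw [e4, e5, ← e1, ← e2, ← e3, mul_assoc]

/-- The canonical identification of the concentration monoid of the discrete one-object
category with the original monoid. -/
def epsMap (N : Type w) [Monoid N] : ConcMon (discreteConc N) → N :=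
  Quot.lift morElem (fun _ _ h => h)

/-- The concentration monoid functor `M` is left adjoint to the functor `C_∼` sending a
monoid to its one-object category with discrete concentration: with counit the canonical
identification `ε` and unit the concentrating functor `η`, the two triangle identities
hold. -/
theorem concMon_adjunction_triangles :
    (∀ {C : Type u} [Category.{v} C] (cs : ConcStruct C)
        [m : Monoid (ConcMon cs)] (hm : IsConcMonoid cs) (x : ConcMon cs),
      epsMap (ConcMon cs)
        (concMap cs (discreteConc (ConcMon cs)) (concentratingFunctor cs hm)
          (fun a b h => Quot.sound h) x) = x) ∧
    (∀ (N : Type w) [Monoid N] [m2 : Monoid (ConcMon (discreteConc N))]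
        (hm2 : IsConcMonoid (discreteConc N)) {X Y : SingleObj N} (x : X ⟶ Y),
      epsMap N ((concentratingFunctor (discreteConc N) hm2).map x) = x) := by
  constructor
  · intro C _ cs m hm x
    induction x using Quot.ind with
    | _ f => rfl
  · intro N _ m2 hm2 X Y x
    rfl
end

section
/- Let (B, ~|_B) be a normal sub-concentration of a category with concentration (C, ~). Define f ~_/B g for morphisms f, g of C iff there exist morphisms h_1, h_2 of B with [h_1][f] = [g][h_2] in the concentration monoid M_(C,~). Then ~_/B is a concentration structure on C, and f ~ g implies f ~_/B g. -/
open CategoryTheory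

universe w v v₂ v₃ u u₂ u₃

/-- The quotient concentration: given a normal sub-concentration `(B, ~|_B)` of `(C, ~)`,
the relation `f ~_/B g ↔ ∃ h₁ h₂ ∈ Mor B, [h₁][f] = [g][h₂]` is a concentration structure
on `C`, and it is implied by `~`. -/
theorem quotientConc_exists {B : Type u} {C : Type u₂}
    [Category.{v} B] [Category.{v₂} C] [Nonempty B]
    (cs : ConcStruct C) (ι : B ⥤ C) (hobj : Function.Injective ι.obj)
    (hfaithful : ∀ {X Y : B}, Function.Injective (ι.map : (X ⟶ Y) → _))
    (bs : ConcStruct B)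
    (hsub : ∀ f g : Mor B, bs.r f g ↔ cs.r (Mor.map ι f) (Mor.map ι g))
    [Mc : Monoid (ConcMon cs)] (hMc : IsConcMonoid cs)
    (hnormal : ∀ (f : Mor C) (h : Mor B),
      (∃ h₁ : Mor B, cs.q f * cs.q (Mor.map ι h) = cs.q (Mor.map ι h₁) * cs.q f) ∧
      (∃ h₂ : Mor B, cs.q (Mor.map ι h) * cs.q f = cs.q f * cs.q (Mor.map ι h₂))) :
    ∃ qs : ConcStruct C,
      (∀ f g : Mor C, qs.r f g ↔ ∃ h₁ h₂ : Mor B,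
        cs.q (Mor.map ι h₁) * cs.q f = cs.q g * cs.q (Mor.map ι h₂)) ∧
      (∀ f g : Mor C, cs.r f g → qs.r f g) := by
  classical
  obtain ⟨b₀⟩ := ‹Nonempty B›
  set e : Mor B → ConcMon cs := fun h => cs.q (Mor.map ι h) with he
  -- product of two B-classes is a B-class
  have hprod : ∀ h k : Mor B, ∃ m : Mor B, e h * e k = e m := by
    intro h k
    obtain ⟨X, Y, Z, h', k', rh, rk⟩ := bs.exists2 h k
    refine ⟨⟨X, Z, k' ≫ h'⟩, ?_⟩
    have e1 : e h = e ⟨Y, Z, h'⟩ := (Quot.sound ((hsub _ _).1 rh)).symm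
    have e2 : e k = e ⟨X, Y, k'⟩ := (Quot.sound ((hsub _ _).1 rk)).symm
    rw [e1, e2]
    show cs.q ⟨ι.obj Y, ι.obj Z, ι.map h'⟩ * cs.q ⟨ι.obj X, ι.obj Y, ι.map k'⟩ = _
    rw [hMc.2]
    simp only [he, Mor.map, Functor.map_comp]
  -- normality for arbitrary classes
  have hnorm : ∀ (x : ConcMon cs) (h : Mor B),
      (∃ h₁ : Mor B, x * e h = e h₁ * x) ∧ (∃ h₂ : Mor B, e h * x = x * e h₂) := by
    intro x h
    induction x using Quot.ind with
    | _ f => exact hnormal f h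
  have hone : e ⟨b₀, b₀, 𝟙 b₀⟩ = 1 := by
    show cs.q ⟨ι.obj b₀, ι.obj b₀, ι.map (𝟙 b₀)⟩ = 1
    rw [ι.map_id]; exact hMc.1 _
  set R : ConcMon cs → ConcMon cs → Prop :=
    fun x y => ∃ a b : Mor B, e a * x = y * e b with hR
  have hrefl : ∀ x, R x x := fun x =>
    ⟨⟨b₀, b₀, 𝟙 b₀⟩, ⟨b₀, b₀, 𝟙 b₀⟩, by rw [hone, one_mul, mul_one]⟩
  have hsymm : ∀ {x y}, R x y → R y x := by
    rintro x y ⟨a, b, hab⟩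
    obtain ⟨b', hb'⟩ := (hnorm y b).1
    obtain ⟨a', ha'⟩ := (hnorm x a).2
    exact ⟨b', a', by rw [← hb', ← hab, ha']⟩
  have htrans : ∀ {x y z}, R x y → R y z → R x z := by
    rintro x y z ⟨a, b, hab⟩ ⟨c, d, hcd⟩
    obtain ⟨m, hm⟩ := hprod c a
    obtain ⟨n, hn⟩ := hprod d b
    refine ⟨m, n, ?_⟩
    calc e m * x = e c * e a * x := by rw [hm]
      _ = e c * (y * e b) := by rw [mul_assoc, hab]
      _ = (e c * y) * e b := by rw [mul_assoc]
      _ = z * e d * e b := by rw [hcd]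
      _ = z * e n := by rw [mul_assoc, hn]
  have hmul : ∀ {x x' y y'}, R x x' → R y y' → R (x * y) (x' * y') := by
    rintro x x' y y' ⟨a₁, b₁, h1⟩ ⟨a₂, b₂, h2⟩
    obtain ⟨a₂', ha₂'⟩ := (hnorm x a₂).1
    obtain ⟨c, hc⟩ := hprod a₁ a₂'
    obtain ⟨b₁', hb₁'⟩ := (hnorm y' b₁).2
    obtain ⟨d, hd⟩ := hprod b₁' b₂
    refine ⟨c, d, ?_⟩
    calc e c * (x * y) = e a₁ * e a₂' * (x * y) := by rw [hc]
      _ = e a₁ * ((e a₂' * x) * y) := by simp only [mul_assoc]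
      _ = e a₁ * ((x * e a₂) * y) := by rw [ha₂']
      _ = (e a₁ * x) * (e a₂ * y) := by
            simp only [mul_assoc]
      _ = (x' * e b₁) * (y' * e b₂) := by rw [h1, h2]
      _ = x' * ((e b₁ * y') * e b₂) := by simp only [mul_assoc]
      _ = x' * ((y' * e b₁') * e b₂) := by rw [hb₁']
      _ = (x' * y') * (e b₁' * e b₂) := by simp only [mul_assoc]
      _ = (x' * y') * e d := by rw [hd]
  have hle : ∀ f g : Mor C, cs.r f g → R (cs.q f) (cs.q g) := by
    intro f g hfg
    have : cs.q f = cs.q g := Quot.sound hfg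
    rw [this]; exact hrefl _
  refine ⟨⟨fun f g => R (cs.q f) (cs.q g),
      ⟨fun f => hrefl _, fun h => hsymm h, fun h h' => htrans h h'⟩,
      ?_, ?_, ?_, ?_⟩, fun f g => Iff.rfl, hle⟩
  · -- ident
    intro A A'
    show R (cs.q ⟨A, A, 𝟙 A⟩) (cs.q ⟨A', A', 𝟙 A'⟩)
    have h : cs.q (⟨A, A, 𝟙 A⟩ : Mor C) = cs.q ⟨A', A', 𝟙 A'⟩ :=
      (hMc.1 A).trans (hMc.1 A').symm
    rw [h]; exact hrefl _
  · -- comp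
    intro X Y Z X' Y' Z' g f g' f' hf hg
    show R (cs.q ⟨X, Z, g ≫ f⟩) (cs.q ⟨X', Z', g' ≫ f'⟩)
    rw [← hMc.2 g f, ← hMc.2 g' f']
    exact hmul hf hg
  · -- exists2
    intro f g
    obtain ⟨X, Y, Z, f', g', hf, hg⟩ := cs.exists2 f g
    exact ⟨X, Y, Z, f', g', hle _ _ hf, hle _ _ hg⟩
  · -- assoc
    intro A B' C₀ U V W X Y P Q R' S f g f' g' h h' m n h1 h2 h3 h4 h5
    show R (cs.q ⟨P, V, n ≫ f'⟩) (cs.q ⟨S, R', h ≫ m⟩)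
    rw [← hMc.2 n f', ← hMc.2 h m]
    have h4' : R (cs.q ⟨Q, R', m⟩) (cs.q ⟨B', C₀, f⟩ * cs.q ⟨A, B', g⟩) := by
      rw [hMc.2]; exact h4
    have h5' : R (cs.q ⟨P, U, n⟩) (cs.q ⟨X, Y, g'⟩ * cs.q ⟨W, X, h'⟩) := by
      rw [hMc.2]; exact h5
    -- f' * n ≈ f * (g' * h') ≈ f * (g * h) = (f*g) * h ≈ m * h
    have step1 : R (cs.q ⟨U, V, f'⟩ * cs.q ⟨P, U, n⟩)
        (cs.q ⟨B', C₀, f⟩ * (cs.q ⟨X, Y, g'⟩ * cs.q ⟨W, X, h'⟩)) :=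
      hmul (hsymm h1) h5'
    have step2 : R (cs.q ⟨X, Y, g'⟩ * cs.q ⟨W, X, h'⟩)
        (cs.q ⟨A, B', g⟩ * cs.q ⟨S, Q, h⟩) := hmul (hsymm h2) (hsymm h3)
    have step3 : R (cs.q ⟨B', C₀, f⟩ * (cs.q ⟨X, Y, g'⟩ * cs.q ⟨W, X, h'⟩))
        (cs.q ⟨B', C₀, f⟩ * (cs.q ⟨A, B', g⟩ * cs.q ⟨S, Q, h⟩)) :=
      hmul (hrefl _) step2
    have step4 : R (cs.q ⟨B', C₀, f⟩ * (cs.q ⟨A, B', g⟩ * cs.q ⟨S, Q, h⟩))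
        (cs.q ⟨Q, R', m⟩ * cs.q ⟨S, Q, h⟩) := by
      rw [← mul_assoc, hMc.2 g f]
      exact hmul (hsymm h4) (hrefl _)
    exact htrans (htrans (htrans step1 step3) step4) (hrefl _)
end

section
/- Let (B, ~|_B) be a normal sub-concentration of (C, ~) and let ~_/B be the quotient concentration (f ~_/B g iff [h_1][f] = [g][h_2] for some morphisms h_1, h_2 of B). Then the concentration monoid M_(C, ~_/B) is isomorphic to the quotient monoid M_(C,~) / M_(B,~|_B), where the quotient of a monoid M by a normal submonoid S is M modulo the congruence a R b iff s_1 a = b s_2 for some s_1, s_2 ∈ S. -/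
open CategoryTheory

universe w v v₂ v₃ u u₂ u₃

/-- The concentration monoid of the quotient concentration `~_/B` is isomorphic to the
quotient of the ambient concentration monoid by the normal submonoid coming from `B`,
where the quotient is by the congruence `a R b ↔ ∃ s₁ s₂ ∈ S, s₁·a = b·s₂`. -/
theorem quotientConc_monoid_iso {B : Type u} {C : Type u₂}
    [Category.{v} B] [Category.{v₂} C] [Nonempty B]
    (cs : ConcStruct C) (ι : B ⥤ C) (hobj : Function.Injective ι.obj)
    (hfaithful : ∀ {X Y : B}, Function.Injective (ι.map : (X ⟶ Y) → _))
    (bs : ConcStruct B)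
    (hsub : ∀ f g : Mor B, bs.r f g ↔ cs.r (Mor.map ι f) (Mor.map ι g))
    [Mc : Monoid (ConcMon cs)] (hMc : IsConcMonoid cs)
    (hnormal : ∀ (f : Mor C) (h : Mor B),
      (∃ h₁ : Mor B, cs.q f * cs.q (Mor.map ι h) = cs.q (Mor.map ι h₁) * cs.q f) ∧
      (∃ h₂ : Mor B, cs.q (Mor.map ι h) * cs.q f = cs.q f * cs.q (Mor.map ι h₂)))
    (qs : ConcStruct C)
    (hqs : ∀ f g : Mor C, qs.r f g ↔ ∃ h₁ h₂ : Mor B,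
      cs.q (Mor.map ι h₁) * cs.q f = cs.q g * cs.q (Mor.map ι h₂))
    [Mq : Monoid (ConcMon qs)] (hMq : IsConcMonoid qs)
    (sR : Setoid (ConcMon cs))
    (hsR : ∀ a b : ConcMon cs, sR.r a b ↔ ∃ h₁ h₂ : Mor B,
      cs.q (Mor.map ι h₁) * a = b * cs.q (Mor.map ι h₂)) :
    (∀ a a' b b' : ConcMon cs, sR.r a a' → sR.r b b' → sR.r (a * b) (a' * b')) ∧
    ∃ Φ : ConcMon qs → Quotient sR,
      (∀ f : Mor C, Φ (qs.q f) = Quotient.mk sR (cs.q f)) ∧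
      Function.Bijective Φ ∧
      (∀ f g : Mor C, Φ (qs.q f * qs.q g) = Quotient.mk sR (cs.q f * cs.q g)) := by
  -- product of two B-classes is again a B-class
  have hBmul : ∀ h k : Mor B, ∃ m : Mor B,
      cs.q (Mor.map ι h) * cs.q (Mor.map ι k) = cs.q (Mor.map ι m) := by
    intro h k
    obtain ⟨X, Y, Z, f', g', hf', hg'⟩ := bs.exists2 h k
    refine ⟨⟨X, Z, g' ≫ f'⟩, ?_⟩
    have e1 : cs.q (Mor.map ι h) = cs.q (Mor.map ι ⟨Y, Z, f'⟩) :=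
      (Quot.sound ((hsub _ _).1 hf')).symm
    have e2 : cs.q (Mor.map ι k) = cs.q (Mor.map ι ⟨X, Y, g'⟩) :=
      (Quot.sound ((hsub _ _).1 hg')).symm
    rw [e1, e2]
    have := hMc.2 (ι.map g') (ι.map f')
    simpa [Mor.map] using this
  -- the relation sR is a congruence
  have hcong : ∀ a a' b b' : ConcMon cs,
      sR.r a a' → sR.r b b' → sR.r (a * b) (a' * b') := by
    intro a a' b b' hab hbb
    obtain ⟨h₁, h₂, e1⟩ := (hsR a a').1 hab
    obtain ⟨k₁, k₂, e2⟩ := (hsR b b').1 hbb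
    obtain ⟨fa', rfl⟩ := Quot.exists_rep a'
    obtain ⟨fb, rfl⟩ := Quot.exists_rep b
    obtain ⟨⟨k₁', ek⟩, -⟩ := hnormal fa' k₁
    obtain ⟨-, ⟨h₂', eh⟩⟩ := hnormal fb h₂
    obtain ⟨m₁, em₁⟩ := hBmul k₁' h₁
    obtain ⟨m₂, em₂⟩ := hBmul k₂ h₂'
    refine (hsR _ _).2 ⟨m₁, m₂, ?_⟩
    have ha' : (Quot.mk cs.r fa' : ConcMon cs) = cs.q fa' := rfl
    have hb : (Quot.mk cs.r fb : ConcMon cs) = cs.q fb := rfl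
    rw [hb] at e2
    rw [ha'] at e1
    rw [ha', hb]
    calc cs.q (Mor.map ι m₁) * (a * cs.q fb)
        = (cs.q (Mor.map ι k₁') * cs.q (Mor.map ι h₁)) * (a * cs.q fb) := by rw [em₁]
      _ = cs.q (Mor.map ι k₁') * ((cs.q (Mor.map ι h₁) * a) * cs.q fb) := by
          simp [mul_assoc]
      _ = cs.q (Mor.map ι k₁') * ((cs.q fa' * cs.q (Mor.map ι h₂)) * cs.q fb) := by rw [e1]
      _ = (cs.q (Mor.map ι k₁') * cs.q fa') * (cs.q (Mor.map ι h₂) * cs.q fb) := by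
          simp [mul_assoc]
      _ = (cs.q fa' * cs.q (Mor.map ι k₁)) * (cs.q fb * cs.q (Mor.map ι h₂')) := by
          rw [← ek, eh]
      _ = cs.q fa' * ((cs.q (Mor.map ι k₁) * cs.q fb) * cs.q (Mor.map ι h₂')) := by
          simp [mul_assoc]
      _ = cs.q fa' * ((b' * cs.q (Mor.map ι k₂)) * cs.q (Mor.map ι h₂')) := by rw [e2]
      _ = (cs.q fa' * b') * (cs.q (Mor.map ι k₂) * cs.q (Mor.map ι h₂')) := by
          simp [mul_assoc]
      _ = (cs.q fa' * b') * cs.q (Mor.map ι m₂) := by rw [em₂]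
  refine ⟨hcong, Quot.lift (fun f => Quotient.mk sR (cs.q f))
    (fun a b h => Quotient.sound ((hsR _ _).2 ((hqs a b).1 h))), fun f => rfl, ⟨?_, ?_⟩, ?_⟩
  · -- injective
    intro x y
    induction x using Quot.ind with | _ f =>
    induction y using Quot.ind with | _ g =>
    intro h
    exact Quot.sound ((hqs f g).2 ((hsR _ _).1 (Quotient.exact h)))
  · -- surjective
    intro y
    induction y using Quotient.ind with | _ a =>
    induction a using Quot.ind with | _ f =>
    exact ⟨Quot.mk qs.r f, rfl⟩
  · -- multiplicativity
    intro f g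
    obtain ⟨X, Y, Z, f', g', hf', hg'⟩ := qs.exists2 f g
    have e1 : qs.q f = qs.q ⟨Y, Z, f'⟩ := (Quot.sound hf').symm
    have e2 : qs.q g = qs.q ⟨X, Y, g'⟩ := (Quot.sound hg').symm
    have r1 : sR.r (cs.q ⟨Y, Z, f'⟩) (cs.q f) := (hsR _ _).2 ((hqs _ _).1 hf')
    have r2 : sR.r (cs.q ⟨X, Y, g'⟩) (cs.q g) := (hsR _ _).2 ((hqs _ _).1 hg')
    rw [e1, e2, hMq.2 g' f']
    show Quotient.mk sR (cs.q ⟨X, Z, g' ≫ f'⟩) = Quotient.mk sR (cs.q f * cs.q g)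
    rw [← hMc.2 g' f']
    exact Quotient.sound (hcong _ _ _ _ r1 r2)
end

section
/- Let (C,~_C) and (D,~_D) be small categories with concentration, and Φ: D → Aut(C) a functor into the one-object category of strongly invertible endofunctors of C that is compatible with the concentrations (α ~_C α' and f ~_D f' imply Φ_f(α) ~_C Φ_{f'}(α')). Define on the semidirect product category C ⋊_Φ D the relation (α,f) ~ (α',f') iff α ~_C α' and f ~_D f'. Then ~ is a concentration structure on C ⋊_Φ D. -/
open CategoryTheory

universe w v v₂ v₃ u u₂ u₃

/-- The semidirect product `C ⋊_Φ D` of two categories along a functor `Φ` from `D` to the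
one-object category of endofunctors of `C` (encoded by its action on morphisms together
with the functoriality equations `hid` and `hcomp`). Objects are pairs. -/
structure SD {C : Type u} {D : Type u₂} [Category.{v} C] [Category.{v₂} D]
    (Φ : ∀ {X Y : D}, (X ⟶ Y) → C ⥤ C)
    (hid : ∀ X : D, Φ (𝟙 X) = 𝟭 C)
    (hcomp : ∀ {X Y Z : D} (f : X ⟶ Y) (g : Y ⟶ Z), Φ (f ≫ g) = Φ f ⋙ Φ g) :
    Type (max u u₂) where
  c : C
  d : D

/-- Morphisms `(C₁,D₁) ⟶ (C₂,D₂)` are pairs `(α, f)` with `f : D₁ ⟶ D₂` and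
`α : Φ_f(C₁) ⟶ C₂`; composition is `(α₂,f₂) ∘ (α₁,f₁) = (α₂ ∘ Φ_{f₂}(α₁), f₂ ∘ f₁)` and the
identity is `(id, id)` (via the identification `Φ_{id} = id`). -/
instance SD.categoryStruct {C : Type u} {D : Type u₂} [Category.{v} C] [Category.{v₂} D]
    {Φ : ∀ {X Y : D}, (X ⟶ Y) → C ⥤ C}
    {hid : ∀ X : D, Φ (𝟙 X) = 𝟭 C}
    {hcomp : ∀ {X Y Z : D} (f : X ⟶ Y) (g : Y ⟶ Z), Φ (f ≫ g) = Φ f ⋙ Φ g} :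
    CategoryStruct (SD Φ hid hcomp) where
  Hom P Q := Σ f : P.d ⟶ Q.d, ((Φ f).obj P.c ⟶ Q.c)
  id P := ⟨𝟙 P.d, eqToHom (by rw [hid]; rfl)⟩
  comp {P Q R} u v := ⟨u.1 ≫ v.1, eqToHom (by rw [hcomp]; rfl) ≫ (Φ v.1).map u.2 ≫ v.2⟩

/-- The `D`-component of a morphism of the semidirect product. -/
def SD.homD {C : Type u} {D : Type u₂} [Category.{v} C] [Category.{v₂} D]
    {Φ : ∀ {X Y : D}, (X ⟶ Y) → C ⥤ C}
    {hid : ∀ X : D, Φ (𝟙 X) = 𝟭 C}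
    {hcomp : ∀ {X Y Z : D} (f : X ⟶ Y) (g : Y ⟶ Z), Φ (f ≫ g) = Φ f ⋙ Φ g}
    {P Q : SD Φ hid hcomp} (u : P ⟶ Q) : P.d ⟶ Q.d := Sigma.fst u

/-- The `C`-component of a morphism of the semidirect product. -/
def SD.homC {C : Type u} {D : Type u₂} [Category.{v} C] [Category.{v₂} D]
    {Φ : ∀ {X Y : D}, (X ⟶ Y) → C ⥤ C}
    {hid : ∀ X : D, Φ (𝟙 X) = 𝟭 C}
    {hcomp : ∀ {X Y Z : D} (f : X ⟶ Y) (g : Y ⟶ Z), Φ (f ≫ g) = Φ f ⋙ Φ g}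
    {P Q : SD Φ hid hcomp} (u : P ⟶ Q) : (Φ (SD.homD u)).obj P.c ⟶ Q.c := Sigma.snd u

lemma mor_eqToHom_comp {C : Type u} [Category.{v} C] {X X' Z : C} (h : X = X')
    (g : X' ⟶ Z) : (⟨X, Z, eqToHom h ≫ g⟩ : Mor C) = ⟨X', Z, g⟩ := by
  subst h; simp

lemma mor_eqToHom {C : Type u} [Category.{v} C] {X Y : C} (h : X = Y) :
    (⟨X, Y, eqToHom h⟩ : Mor C) = ⟨Y, Y, 𝟙 Y⟩ := by
  subst h; rfl

lemma mor_map_eqF {C : Type u} [Category.{v} C] {F G : C ⥤ C} (h : F = G) (x : Mor C) :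
    Mor.map F x = Mor.map G x := by subst h; rfl

lemma mor_map_id {C : Type u} [Category.{v} C] (x : Mor C) :
    Mor.map (𝟭 C) x = x := rfl

lemma mor_map_comp {C : Type u} [Category.{v} C] (F G : C ⥤ C) (x : Mor C) :
    Mor.map (F ⋙ G) x = Mor.map G (Mor.map F x) := rfl

section SDlemmas

variable {C : Type u} {D : Type u₂} [Category.{v} C] [Category.{v₂} D]
    {Φ : ∀ {X Y : D}, (X ⟶ Y) → C ⥤ C}
    {hid : ∀ X : D, Φ (𝟙 X) = 𝟭 C}
    {hcomp : ∀ {X Y Z : D} (f : X ⟶ Y) (g : Y ⟶ Z), Φ (f ≫ g) = Φ f ⋙ Φ g}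

lemma sd_homD_comp {P Q R : SD Φ hid hcomp} (u : P ⟶ Q) (v : Q ⟶ R) :
    SD.homD (u ≫ v) = SD.homD u ≫ SD.homD v := rfl

lemma sd_homC_comp_mor {P Q R : SD Φ hid hcomp} (u : P ⟶ Q) (v : Q ⟶ R) :
    (⟨(Φ (SD.homD (u ≫ v))).obj P.c, R.c, SD.homC (u ≫ v)⟩ : Mor C) =
      ⟨(Φ (SD.homD v)).obj ((Φ (SD.homD u)).obj P.c), R.c,
        (Φ (SD.homD v)).map (SD.homC u) ≫ SD.homC v⟩ :=
  mor_eqToHom_comp _ _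

lemma sd_homC_id_mor (P : SD Φ hid hcomp) :
    (⟨(Φ (SD.homD (𝟙 P))).obj P.c, P.c, SD.homC (𝟙 P)⟩ : Mor C) =
      ⟨P.c, P.c, 𝟙 P.c⟩ :=
  mor_eqToHom (by show (Φ (𝟙 P.d)).obj P.c = P.c; rw [hid]; rfl)

end SDlemmas

/-- If `Φ` takes values in strongly invertible endofunctors (`Aut(C)`) and is compatible
with the concentrations on `C` and `D`, then `(α,f) ~ (α',f') ↔ α ~_C α' ∧ f ~_D f'`
defines a concentration structure on the semidirect product `C ⋊_Φ D`. -/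
theorem SD_conc_exists {C : Type u} {D : Type u₂} [Category.{v} C] [Category.{v₂} D]
    (Φ : ∀ {X Y : D}, (X ⟶ Y) → C ⥤ C)
    (hid : ∀ X : D, Φ (𝟙 X) = 𝟭 C)
    (hcomp : ∀ {X Y Z : D} (f : X ⟶ Y) (g : Y ⟶ Z), Φ (f ≫ g) = Φ f ⋙ Φ g)
    (hinv : ∀ {X Y : D} (f : X ⟶ Y), ∃ G : C ⥤ C, Φ f ⋙ G = 𝟭 C ∧ G ⋙ Φ f = 𝟭 C)
    (csC : ConcStruct C) (csD : ConcStruct D)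
    (hcompat : ∀ {X Y X' Y' : D} (f : X ⟶ Y) (f' : X' ⟶ Y') (α α' : Mor C),
      csC.r α α' → csD.r ⟨X, Y, f⟩ ⟨X', Y', f'⟩ →
      csC.r (Mor.map (Φ f) α) (Mor.map (Φ f') α')) :
    ∃ scs : ConcStruct (SD Φ hid hcomp),
      ∀ (P Q P' Q' : SD Φ hid hcomp) (u : P ⟶ Q) (u' : P' ⟶ Q'),
        scs.r ⟨P, Q, u⟩ ⟨P', Q', u'⟩ ↔
          (csC.r ⟨(Φ (SD.homD u)).obj P.c, Q.c, SD.homC u⟩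
                 ⟨(Φ (SD.homD u')).obj P'.c, Q'.c, SD.homC u'⟩ ∧
           csD.r ⟨P.d, Q.d, SD.homD u⟩ ⟨P'.d, Q'.d, SD.homD u'⟩) := by
  refine ⟨⟨fun x y =>
      csC.r ⟨_, _, SD.homC x.2.2⟩ ⟨_, _, SD.homC y.2.2⟩ ∧
      csD.r ⟨_, _, SD.homD x.2.2⟩ ⟨_, _, SD.homD y.2.2⟩, ?_, ?_, ?_, ?_, ?_⟩,
    fun P Q P' Q' u u' => Iff.rfl⟩
  · -- equivalence
    refine ⟨fun x => ⟨csC.equiv.refl _, csD.equiv.refl _⟩,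
      fun h => ⟨csC.equiv.symm h.1, csD.equiv.symm h.2⟩,
      fun h₁ h₂ => ⟨csC.equiv.trans h₁.1 h₂.1, csD.equiv.trans h₁.2 h₂.2⟩⟩
  · -- identity
    intro A B
    refine ⟨?_, csD.ident A.d B.d⟩
    rw [sd_homC_id_mor (hcomp := hcomp) A, sd_homC_id_mor (hcomp := hcomp) B]
    exact csC.ident A.c B.c
  · -- composition
    intro X Y Z X' Y' Z' g f g' f' hf hg
    refine ⟨?_, csD.comp _ _ _ _ hf.2 hg.2⟩
    rw [sd_homC_comp_mor (hcomp := hcomp) g f, sd_homC_comp_mor (hcomp := hcomp) g' f']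
    exact csC.comp _ _ _ _ hf.1
      (hcompat (SD.homD f) (SD.homD f') _ _ hg.1 hf.2)
  · -- 2-existence
    intro x y
    obtain ⟨P, Q, u⟩ := x
    obtain ⟨P', Q', v⟩ := y
    obtain ⟨X, Y, Z, fD, gD, hfD, hgD⟩ :=
      csD.exists2 ⟨P.d, Q.d, SD.homD u⟩ ⟨P'.d, Q'.d, SD.homD v⟩
    obtain ⟨Gf, hGf1, hGf2⟩ := hinv fD
    obtain ⟨Gg, hGg1, hGg2⟩ := hinv gD
    obtain ⟨Ac, Bc, B'c, α₀, β₀, hα₀, hβ₀⟩ :=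
      csC.exists2 (Mor.map Gf ⟨_, _, SD.homC u⟩) ⟨_, _, SD.homC v⟩
    have e₁ : (Φ gD).obj (Gg.obj Ac) = Ac := by
      rw [← Functor.comp_obj, hGg2]; rfl
    refine ⟨⟨Gg.obj Ac, X⟩, ⟨Bc, Y⟩, ⟨(Φ fD).obj B'c, Z⟩,
      ⟨fD, (Φ fD).map α₀⟩, ⟨gD, eqToHom e₁ ≫ β₀⟩, ⟨?_, hfD⟩, ⟨?_, hgD⟩⟩
    · -- C-part of top
      have h1 : csC.r (Mor.map (Φ fD) ⟨Bc, B'c, α₀⟩)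
          (Mor.map (Φ fD) (Mor.map Gf ⟨_, _, SD.homC u⟩)) :=
        hcompat fD fD _ _ hα₀ (csD.equiv.refl _)
      have h2 : Mor.map (Φ fD) (Mor.map Gf ⟨_, _, SD.homC u⟩) =
          (⟨(Φ (SD.homD u)).obj P.c, Q.c, SD.homC u⟩ : Mor C) := by
        rw [← mor_map_comp, mor_map_eqF hGf2, mor_map_id]
      exact h2 ▸ h1
    · -- C-part of bottom
      have h3 : (⟨(Φ gD).obj (Gg.obj Ac), Bc, eqToHom e₁ ≫ β₀⟩ : Mor C) =
          ⟨Ac, Bc, β₀⟩ := mor_eqToHom_comp e₁ β₀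
      exact h3 ▸ hβ₀
  · -- associativity
    intro A B C₀ U V W X Y P Q R S f g f' g' h h' m n h1 h2 h3 h4 h5
    obtain ⟨h1C, h1D⟩ := h1
    obtain ⟨h2C, h2D⟩ := h2
    obtain ⟨h3C, h3D⟩ := h3
    obtain ⟨h4C, h4D⟩ := h4
    obtain ⟨h5C, h5D⟩ := h5
    rw [sd_homC_comp_mor (hcomp := hcomp) g f] at h4C
    rw [sd_homC_comp_mor (hcomp := hcomp) h' g'] at h5C
    constructor
    · rw [sd_homC_comp_mor (hcomp := hcomp) n f', sd_homC_comp_mor (hcomp := hcomp) h m]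
      -- prepare the hypotheses of csC.assoc
      have H3a : csC.r (Mor.map (Φ (SD.homD m)) ⟨_, _, SD.homC h⟩)
          (Mor.map (Φ (SD.homD g ≫ SD.homD f)) ⟨_, _, SD.homC h⟩) :=
        hcompat _ _ _ _ (csC.equiv.refl _) h4D
      have H3b : csC.r
          (Mor.map (Φ (SD.homD f)) (Mor.map (Φ (SD.homD g)) ⟨_, _, SD.homC h⟩))
          (Mor.map (Φ (SD.homD f'))
            (Mor.map (Φ (SD.homD g')) ⟨_, _, SD.homC h'⟩)) :=
        hcompat _ _ _ _ (hcompat _ _ _ _ h3C h2D) h1D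
      have H3 : csC.r (Mor.map (Φ (SD.homD m)) ⟨_, _, SD.homC h⟩)
          (Mor.map (Φ (SD.homD f'))
            (Mor.map (Φ (SD.homD g')) ⟨_, _, SD.homC h'⟩)) := by
        refine csC.equiv.trans H3a ?_
        rw [mor_map_eqF (hcomp (SD.homD g) (SD.homD f)), mor_map_comp]
        exact H3b
      have H2 : csC.r
          (Mor.map (Φ (SD.homD f)) ⟨_, _, SD.homC g⟩)
          (Mor.map (Φ (SD.homD f')) ⟨_, _, SD.homC g'⟩) :=
        hcompat _ _ _ _ h2C h1D
      have H5 : csC.r (Mor.map (Φ (SD.homD f')) ⟨_, _, SD.homC n⟩)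
          (Mor.map (Φ (SD.homD f'))
            ⟨_, _, (Φ (SD.homD g')).map (SD.homC h') ≫ SD.homC g'⟩) :=
        hcompat _ _ _ _ h5C (csD.equiv.refl _)
      have := csC.assoc (SD.homC f) ((Φ (SD.homD f)).map (SD.homC g))
        (SD.homC f') ((Φ (SD.homD f')).map (SD.homC g'))
        ((Φ (SD.homD m)).map (SD.homC h))
        ((Φ (SD.homD f')).map ((Φ (SD.homD g')).map (SD.homC h')))
        (SD.homC m) ((Φ (SD.homD f')).map (SD.homC n))
        h1C H2 H3 h4C ?_
      · exact this
      · have e : ((Φ (SD.homD f')).map ((Φ (SD.homD g')).map (SD.homC h')) ≫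
            (Φ (SD.homD f')).map (SD.homC g')) =
            (Φ (SD.homD f')).map ((Φ (SD.homD g')).map (SD.homC h') ≫ SD.homC g') := by
          rw [Functor.map_comp]
        exact e ▸ H5
    · exact csD.assoc (SD.homD f) (SD.homD g) (SD.homD f') (SD.homD g')
        (SD.homD h) (SD.homD h') (SD.homD m) (SD.homD n) h1D h2D h3D h4D h5D
end

section
/- Let (C,~_C), (D,~_D) be small categories with concentration and Φ: D → Aut(C) compatible with the concentrations. Let φ: M_(D,~_D) → Aut(M_(C,~_C)) be the induced homomorphism (φ[f])[α] = [Φ_f(α)]. Then the concentration monoid of the semidirect product, M_(C⋊_Φ D, ~_⋊), is isomorphic to the semidirect product of monoids M_(C,~_C) ⋊_φ M_(D,~_D) via [(α,f)] ↦ ([α],[f]). -/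
open CategoryTheory

universe w v v₂ v₃ u u₂ u₃

/-- Auxiliary: composing with an `eqToHom` does not change the class. -/
lemma q_eqToHom_comp {C : Type u} [Category.{v} C] (cs : ConcStruct C) {X' X Y : C}
    (e : X' = X) (α : X ⟶ Y) : cs.q ⟨X', Y, eqToHom e ≫ α⟩ = cs.q ⟨X, Y, α⟩ := by
  subst e; simp

/-- The concentration monoid of the semidirect product of categories with concentration is
the semidirect product of the concentration monoids: the map `[(α,f)] ↦ ([α],[f])` is a
bijection under which multiplication becomes
`([α],[f])·([β],[g]) = ([α]·φ_{[f]}([β]), [f]·[g])` with `φ_{[f]}[β] = [Φ_f(β)]`. -/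
theorem SD_concMon_iso {C : Type u} {D : Type u₂} [Category.{v} C] [Category.{v₂} D]
    (Φ : ∀ {X Y : D}, (X ⟶ Y) → C ⥤ C)
    (hid : ∀ X : D, Φ (𝟙 X) = 𝟭 C)
    (hcomp : ∀ {X Y Z : D} (f : X ⟶ Y) (g : Y ⟶ Z), Φ (f ≫ g) = Φ f ⋙ Φ g)
    (hinv : ∀ {X Y : D} (f : X ⟶ Y), ∃ G : C ⥤ C, Φ f ⋙ G = 𝟭 C ∧ G ⋙ Φ f = 𝟭 C)
    (csC : ConcStruct C) (csD : ConcStruct D)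
    (hcompat : ∀ {X Y X' Y' : D} (f : X ⟶ Y) (f' : X' ⟶ Y') (α α' : Mor C),
      csC.r α α' → csD.r ⟨X, Y, f⟩ ⟨X', Y', f'⟩ →
      csC.r (Mor.map (Φ f) α) (Mor.map (Φ f') α'))
    (scs : ConcStruct (SD Φ hid hcomp))
    (hchar : ∀ (P Q P' Q' : SD Φ hid hcomp) (u : P ⟶ Q) (u' : P' ⟶ Q'),
      scs.r ⟨P, Q, u⟩ ⟨P', Q', u'⟩ ↔
        (csC.r ⟨(Φ (SD.homD u)).obj P.c, Q.c, SD.homC u⟩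
               ⟨(Φ (SD.homD u')).obj P'.c, Q'.c, SD.homC u'⟩ ∧
         csD.r ⟨P.d, Q.d, SD.homD u⟩ ⟨P'.d, Q'.d, SD.homD u'⟩))
    [Ms : Monoid (ConcMon scs)] (hMs : IsConcMonoid scs)
    [Mc : Monoid (ConcMon csC)] (hMc : IsConcMonoid csC)
    [Md : Monoid (ConcMon csD)] (hMd : IsConcMonoid csD) :
    ∃ θ : ConcMon scs → ConcMon csC × ConcMon csD,
      (∀ (P Q : SD Φ hid hcomp) (u : P ⟶ Q),
        θ (scs.q ⟨P, Q, u⟩) =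
          (csC.q ⟨(Φ (SD.homD u)).obj P.c, Q.c, SD.homC u⟩,
           csD.q ⟨P.d, Q.d, SD.homD u⟩)) ∧
      Function.Bijective θ ∧
      (∀ (P Q P' Q' : SD Φ hid hcomp) (u : P ⟶ Q) (v : P' ⟶ Q'),
        θ (scs.q ⟨P, Q, u⟩ * scs.q ⟨P', Q', v⟩) =
          (csC.q ⟨(Φ (SD.homD u)).obj P.c, Q.c, SD.homC u⟩ *
             csC.q (Mor.map (Φ (SD.homD u))
               ⟨(Φ (SD.homD v)).obj P'.c, Q'.c, SD.homC v⟩),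
           csD.q ⟨P.d, Q.d, SD.homD u⟩ * csD.q ⟨P'.d, Q'.d, SD.homD v⟩)) := by
  classical
  -- the map on morphisms
  set θm : Mor (SD Φ hid hcomp) → ConcMon csC × ConcMon csD :=
    fun m => (csC.q ⟨(Φ (SD.homD m.2.2)).obj m.1.c, m.2.1.c, SD.homC m.2.2⟩,
              csD.q ⟨m.1.d, m.2.1.d, SD.homD m.2.2⟩) with hθm
  have hwd : ∀ a b : Mor (SD Φ hid hcomp), scs.r a b → θm a = θm b := by
    rintro ⟨P, Q, u⟩ ⟨P', Q', u'⟩ h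
    obtain ⟨h1, h2⟩ := (hchar P Q P' Q' u u').mp h
    exact Prod.ext (Quot.sound h1) (Quot.sound h2)
  refine ⟨Quot.lift θm hwd, fun P Q u => rfl, ⟨?_, ?_⟩, ?_⟩
  · -- injective
    intro a b
    induction a using Quot.ind with | _ a =>
    induction b using Quot.ind with | _ b =>
    obtain ⟨P, Q, u⟩ := a
    obtain ⟨P', Q', u'⟩ := b
    intro h
    have h1 := congrArg Prod.fst h
    have h2 := congrArg Prod.snd h
    simp only [hθm] at h1 h2
    have r1 := csC.equiv.eqvGen_iff.mp (Quot.eq.mp h1)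
    have r2 := csD.equiv.eqvGen_iff.mp (Quot.eq.mp h2)
    exact Quot.sound ((hchar P Q P' Q' u u').mpr ⟨r1, r2⟩)
  · -- surjective
    rintro ⟨x, y⟩
    induction x using Quot.ind with | _ x =>
    induction y using Quot.ind with | _ y =>
    obtain ⟨Xc, Yc, α⟩ := x
    obtain ⟨Xd, Yd, f⟩ := y
    obtain ⟨G, hG1, hG2⟩ := hinv f
    have e : (Φ f).obj (G.obj Xc) = Xc := by
      have := Functor.congr_obj hG2 Xc
      simpa using this
    refine ⟨Quot.mk scs.r ⟨⟨G.obj Xc, Xd⟩, ⟨Yc, Yd⟩, ⟨f, eqToHom e ≫ α⟩⟩, ?_⟩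
    simp only [hθm]
    refine Prod.ext ?_ rfl
    exact q_eqToHom_comp csC e α
  · -- multiplication
    intro P Q P' Q' u v
    obtain ⟨X, Y, Z, f', g', hf', hg'⟩ := scs.exists2 ⟨P, Q, u⟩ ⟨P', Q', v⟩
    -- rewrite the product using composable representatives
    have hqu : scs.q ⟨P, Q, u⟩ = scs.q ⟨Y, Z, f'⟩ := (Quot.sound hf').symm
    have hqv : scs.q ⟨P', Q', v⟩ = scs.q ⟨X, Y, g'⟩ := (Quot.sound hg').symm
    have hprod : scs.q ⟨P, Q, u⟩ * scs.q ⟨P', Q', v⟩ = scs.q ⟨X, Z, g' ≫ f'⟩ := by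
      rw [hqu, hqv, hMs.2]
    obtain ⟨hfC, hfD⟩ := (hchar Y Z P Q f' u).mp hf'
    obtain ⟨hgC, hgD⟩ := (hchar X Y P' Q' g' v).mp hg'
    obtain ⟨f1, f2⟩ := f'
    obtain ⟨g1, g2⟩ := g'
    rw [hprod]
    refine Prod.ext ?_ ?_
    · -- C component
      show csC.q ⟨(Φ (g1 ≫ f1)).obj X.c, Z.c,
          eqToHom (by rw [hcomp]; rfl) ≫ (Φ f1).map g2 ≫ f2⟩ = _
      rw [q_eqToHom_comp]
      have e1 : csC.q ⟨(Φ (SD.homD u)).obj P.c, Q.c, SD.homC u⟩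
          = csC.q ⟨(Φ f1).obj Y.c, Z.c, f2⟩ := (Quot.sound hfC).symm
      have rmap := hcompat (SD.homD u) f1
        ⟨(Φ (SD.homD v)).obj P'.c, Q'.c, SD.homC v⟩ ⟨(Φ g1).obj X.c, Y.c, g2⟩
        (csC.equiv.symm hgC) (csD.equiv.symm hfD)
      have e2 : csC.q (Mor.map (Φ (SD.homD u))
            ⟨(Φ (SD.homD v)).obj P'.c, Q'.c, SD.homC v⟩)
          = csC.q ⟨(Φ f1).obj ((Φ g1).obj X.c), (Φ f1).obj Y.c, (Φ f1).map g2⟩ :=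
        Quot.sound rmap
      rw [e1, e2, hMc.2]
    · -- D component
      show csD.q ⟨X.d, Z.d, g1 ≫ f1⟩ = _
      have e1 : csD.q ⟨P.d, Q.d, SD.homD u⟩ = csD.q ⟨Y.d, Z.d, f1⟩ :=
        (Quot.sound hfD).symm
      have e2 : csD.q ⟨P'.d, Q'.d, SD.homD v⟩ = csD.q ⟨X.d, Y.d, g1⟩ :=
        (Quot.sound hgD).symm
      rw [e1, e2, hMd.2]
end
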